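/- arXiv:2412.11676 — 2 statements merged into one kernel-verified Lean document; each statement's English description precedes it below -/
import Mathlib

section
/- For r > 0, the polynomial r²X² + X²Y² − r⁴ in ℝ[X,Y] (equivalently in ℂ[X,Y]) is irreducible. -/
open Polynomial in
lemma aux_irred {F : Type*} [Field F] [CharZero F] (r : F) (hr : r ≠ 0) :
    Irreducible (Polynomial.C (X ^ 2 : Polynomial F) * Polynomial.X ^ 2 +
      Polynomial.C (Polynomial.C (r ^ 2) * X ^ 2 - Polynomial.C (r ^ 4))) := by
  set p0 : Polynomial F := Polynomial.C (r ^ 2) * X ^ 2 - Polynomial.C (r ^ 4) with hp0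
  set q : Polynomial (Polynomial F) := Polynomial.C (X ^ 2 : Polynomial F) * Polynomial.X ^ 2 +
      Polynomial.C p0 with hq
  have hX2 : (X ^ 2 : Polynomial F) ≠ 0 := pow_ne_zero _ X_ne_zero
  have hdeg : q.natDegree = 2 := by
    rw [hq]; compute_degree!
  have hprime : Prime (X - Polynomial.C r : Polynomial F) := prime_X_sub_C r
  have hp0fac : p0 = Polynomial.C (r ^ 2) * ((X - Polynomial.C r) * (X + Polynomial.C r)) := by
    rw [hp0]
    simp only [show (r^2:F) = r*r from sq r, show (r^4:F) = r*r*(r*r) by ring, map_mul]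
    ring
  have hco0 : q.coeff 0 = p0 := by
    rw [hq]; simp [coeff_X_pow, coeff_C_mul, coeff_add, -map_pow]
  have hco1 : q.coeff 1 = 0 := by
    rw [hq]; simp [coeff_X_pow, coeff_C_mul, coeff_add, Polynomial.coeff_C, -map_pow]
  have hco2 : q.coeff 2 = X ^ 2 := by
    rw [hq]; simp [coeff_X_pow, coeff_C_mul, coeff_add, Polynomial.coeff_C, -map_pow]
  set 𝓟 : Ideal (Polynomial F) := Ideal.span {X - Polynomial.C r} with h𝓟
  have hPprime : 𝓟.IsPrime := (Ideal.span_singleton_prime hprime.ne_zero).2 hprime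
  have hmem : ∀ g : Polynomial F, g ∈ 𝓟 ↔ (X - Polynomial.C r) ∣ g := fun g =>
    Ideal.mem_span_singleton
  have hX2notmem : (X ^ 2 : Polynomial F) ∉ 𝓟 := by
    rw [hmem, dvd_iff_isRoot]
    simp [IsRoot, hr]
  have heis : q.IsEisensteinAt 𝓟 := by
    constructor
    · rw [Polynomial.leadingCoeff, hdeg, hco2]
      exact hX2notmem
    · intro n hn
      rw [hdeg] at hn
      interval_cases n
      · rw [hco0, hmem, hp0fac]
        exact ⟨Polynomial.C (r ^ 2) * (X + Polynomial.C r), by ring⟩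
      · rw [hco1]; exact 𝓟.zero_mem
    · rw [hco0, h𝓟, Ideal.span_singleton_pow, Ideal.mem_span_singleton]
      intro hdvd
      rw [hp0fac] at hdvd
      have h1 : (X - Polynomial.C r) ∣ Polynomial.C (r ^ 2) * (X + Polynomial.C r) := by
        have h2 : (X - Polynomial.C r) * (X - Polynomial.C r) ∣
            (X - Polynomial.C r) * (Polynomial.C (r ^ 2) * (X + Polynomial.C r)) := by
          rw [← sq]
          refine hdvd.trans (dvd_of_eq ?_)
          ring
        exact (mul_dvd_mul_iff_left (sub_ne_zero.2 (X_ne_C r))).1 h2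
      rw [dvd_iff_isRoot] at h1
      simp only [IsRoot, eval_mul, eval_add, eval_C, eval_X] at h1
      have h2r : r + r ≠ 0 := by
        intro h
        have h2 : (2:F) * r = 0 := by rw [two_mul]; exact h
        rcases mul_eq_zero.1 h2 with h | h
        · exact two_ne_zero h
        · exact hr h
      exact (mul_ne_zero (pow_ne_zero _ hr) h2r) h1
  have hprimitive : q.IsPrimitive := by
    intro c hc
    rw [Polynomial.C_dvd_iff_dvd_coeff] at hc
    have hc2 : c ∣ X ^ 2 := by have := hc 2; rwa [hco2] at this
    have hc0 : c ∣ p0 := by have := hc 0; rwa [hco0] at this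
    obtain ⟨i, hi, hassoc⟩ := (dvd_prime_pow prime_X 2).1 hc2
    rcases Nat.eq_zero_or_pos i with h0 | hpos
    · rw [h0, pow_zero] at hassoc
      exact associated_one_iff_isUnit.1 hassoc
    · exfalso
      obtain ⟨u, hu⟩ := hassoc.symm
      have hXc : (X : Polynomial F) ∣ c :=
        (dvd_pow_self X (Nat.pos_iff_ne_zero.mp hpos)).trans (hu ▸ dvd_mul_right _ _)
      have hXp0 : (X : Polynomial F) ∣ p0 := hXc.trans hc0
      rw [Polynomial.X_dvd_iff] at hXp0
      rw [hp0] at hXp0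
      simp only [coeff_sub, coeff_C_mul, coeff_X_pow, Polynomial.coeff_C, if_pos rfl,
        if_neg (by norm_num : ¬ (0:ℕ) = 2), mul_zero, zero_sub, neg_eq_zero] at hXp0
      exact pow_ne_zero 4 hr hXp0
  exact heis.irreducible hPprime hprimitive (by rw [hdeg]; norm_num)

noncomputable def myEquiv (F : Type*) [CommSemiring F] :
    MvPolynomial (Fin 2) F ≃+* Polynomial (Polynomial F) :=
  (MvPolynomial.renameEquiv F (Equiv.swap (0 : Fin 2) 1)).toRingEquiv.trans
    ((MvPolynomial.finSuccEquiv F 1).toRingEquiv.trans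
      (Polynomial.mapEquiv
        ((MvPolynomial.renameEquiv F (Equiv.equivPUnit.{1,1} (Fin 1))).trans
          (MvPolynomial.pUnitAlgEquiv F)).toRingEquiv))

open Polynomial MvPolynomial in
lemma myEquiv_apply {F : Type*} [CommRing F] (r : F) :
    myEquiv F (MvPolynomial.C (r^2) * MvPolynomial.X 0 ^ 2 +
      MvPolynomial.X 0 ^ 2 * MvPolynomial.X 1 ^ 2 - MvPolynomial.C (r^4) :
        MvPolynomial (Fin 2) F) =
    Polynomial.C (Polynomial.X ^ 2 : Polynomial F) * Polynomial.X ^ 2 +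
      Polynomial.C (Polynomial.C (r ^ 2) * Polynomial.X ^ 2 - Polynomial.C (r ^ 4)) := by
  have h1 : ((1 : Fin 2)) = (0 : Fin 1).succ := rfl
  have hC : ∀ a : F, MvPolynomial.finSuccEquiv F 1 (MvPolynomial.C a) =
      Polynomial.C (MvPolynomial.C a) := fun a => by
    simp [MvPolynomial.finSuccEquiv_apply]
  have hι1 : ((MvPolynomial.renameEquiv F (Equiv.equivPUnit.{1,1} (Fin 1))).trans
      (MvPolynomial.pUnitAlgEquiv F)) (MvPolynomial.X 0) = Polynomial.X := by
    simp
  have hι2 : ∀ a : F, ((MvPolynomial.renameEquiv F (Equiv.equivPUnit.{1,1} (Fin 1))).trans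
      (MvPolynomial.pUnitAlgEquiv F)) (MvPolynomial.C a) = Polynomial.C a := fun a => by
    simp
  simp only [myEquiv, RingEquiv.trans_apply, AlgEquiv.toRingEquiv_eq_coe,
    AlgEquiv.coe_ringEquiv, map_sub, map_add, map_mul, map_pow,
    MvPolynomial.renameEquiv_apply, MvPolynomial.rename_C, MvPolynomial.rename_X,
    Equiv.swap_apply_left, Equiv.swap_apply_right,
    MvPolynomial.finSuccEquiv_comp_C_eq_C, h1,
    MvPolynomial.finSuccEquiv_X_zero, MvPolynomial.finSuccEquiv_X_succ,
    Polynomial.mapEquiv_apply, Polynomial.map_C, Polynomial.map_X,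
    AlgEquiv.trans_apply,
    MvPolynomial.eval₂_C, MvPolynomial.eval₂_X, hC, hι1, hι2]
  simp only [RingHom.coe_coe, AlgEquiv.coe_ringEquiv, EquivLike.coe_coe, hι1, hι2]
  ring

open MvPolynomial in
lemma aux_main {F : Type*} [Field F] [CharZero F] (r : F) (hr : r ≠ 0) :
    Irreducible ((C (r^2) * X 0 ^ 2 + X 0 ^ 2 * X 1 ^ 2 - C (r^4) :
        MvPolynomial (Fin 2) F)) := by
  have h := aux_irred r hr
  rw [← myEquiv_apply r] at h
  exact (MulEquiv.irreducible_iff (myEquiv F)).1 h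

open MvPolynomial in
theorem kulp_irreducible (r : ℝ) (hr : r > 0) :
    Irreducible ((C (r^2) * X 0 ^ 2 + X 0 ^ 2 * X 1 ^ 2 - C (r^4) :
        MvPolynomial (Fin 2) ℝ)) ∧
    Irreducible ((C ((r : ℂ)^2) * X 0 ^ 2 + X 0 ^ 2 * X 1 ^ 2 - C ((r : ℂ)^4) :
        MvPolynomial (Fin 2) ℂ)) :=
  ⟨aux_main r hr.ne', aux_main (r : ℂ) (Complex.ofReal_ne_zero.2 hr.ne')⟩
end

section
/- For a, b > 0, the polynomial X⁴ − a²X² + b²Y² is irreducible in ℝ[X, Y]. -/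
open MvPolynomial Polynomial in
noncomputable def myE : MvPolynomial (Fin 2) ℝ ≃ₐ[ℝ] Polynomial (Polynomial ℝ) :=
  (renameEquiv ℝ (Equiv.swap 0 1)).trans ((MvPolynomial.finSuccEquiv ℝ 1).trans
    (Polynomial.mapAlgEquiv ((MvPolynomial.finSuccEquiv ℝ 0).trans
      (Polynomial.mapAlgEquiv (isEmptyAlgEquiv ℝ (Fin 0))))))

open MvPolynomial Polynomial in
lemma myE_X0 : myE (X 0) = Polynomial.C Polynomial.X := by
  have h0 : Equiv.swap (0 : Fin 2) 1 0 = Fin.succ 0 := by decide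
  simp only [myE, AlgEquiv.trans_apply, renameEquiv_apply, rename_X, h0,
    MvPolynomial.finSuccEquiv_X_succ, Polynomial.mapAlgEquiv]
  simp [MvPolynomial.finSuccEquiv_X_zero]

open MvPolynomial Polynomial in
lemma myE_X1 : myE (X 1) = Polynomial.X := by
  have h1 : Equiv.swap (0 : Fin 2) 1 1 = 0 := by decide
  simp only [myE, AlgEquiv.trans_apply, renameEquiv_apply, rename_X, h1,
    MvPolynomial.finSuccEquiv_X_zero, Polynomial.mapAlgEquiv]
  simp

open MvPolynomial Polynomial in
lemma finSuccEquiv_C' (n : ℕ) (r : ℝ) : MvPolynomial.finSuccEquiv ℝ n (MvPolynomial.C r)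
    = Polynomial.C (MvPolynomial.C r) := by
  rw [MvPolynomial.finSuccEquiv_apply]; simp

open MvPolynomial Polynomial in
lemma myE_C (r : ℝ) : myE (MvPolynomial.C r) = Polynomial.C (Polynomial.C r) := by
  simp only [myE, AlgEquiv.trans_apply, renameEquiv_apply, rename_C, finSuccEquiv_C',
    Polynomial.mapAlgEquiv]
  simp [finSuccEquiv_C']
  exact MvPolynomial.coeff_zero_C r

open Polynomial in
lemma q_irred (a b : ℝ) (ha : a > 0) (hb : b > 0) :
    Irreducible (Polynomial.C (Polynomial.X ^ 4 - Polynomial.C (a^2) * Polynomial.X ^ 2)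
      + Polynomial.C (Polynomial.C (b^2)) * Polynomial.X ^ 2 :
      Polynomial (Polynomial ℝ)) := by
  set v : Polynomial ℝ := Polynomial.X ^ 4 - Polynomial.C (a^2) * Polynomial.X ^ 2 with hv
  set q : Polynomial (Polynomial ℝ) :=
    Polynomial.C v + Polynomial.C (Polynomial.C (b^2)) * Polynomial.X ^ 2 with hq
  have hb2 : (b : ℝ)^2 ≠ 0 := by positivity
  have hub : IsUnit (Polynomial.C (b^2) : Polynomial ℝ) :=
    Polynomial.isUnit_C.mpr (isUnit_iff_ne_zero.mpr hb2)
  have hdeg : q.natDegree = 2 := by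
    rw [hq]; compute_degree!
    exact hb.ne'
  have hc2 : q.coeff 2 = Polynomial.C (b^2) := by
    simp [hq, Polynomial.coeff_C, -map_pow]
  have hc1 : q.coeff 1 = 0 := by
    simp [hq, Polynomial.coeff_C, -map_pow]
  have hc0 : q.coeff 0 = v := by
    simp [hq, Polynomial.coeff_C, -map_pow]
  set P : Ideal (Polynomial ℝ) := Ideal.span {Polynomial.X - Polynomial.C a} with hP
  have hXa : (Polynomial.X - Polynomial.C a : Polynomial ℝ) ≠ 0 := Polynomial.X_sub_C_ne_zero a
  have hprime : P.IsPrime :=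
    (Ideal.span_singleton_prime hXa).mpr (Polynomial.prime_X_sub_C a)
  have heis : q.IsEisensteinAt P := by
    constructor
    · rw [Polynomial.leadingCoeff, hdeg, hc2, hP, Ideal.mem_span_singleton]
      intro hdvd
      have := Polynomial.eval_dvd (x := a) hdvd
      simp at this
      exact hb.ne' this
    · intro n hn
      rw [hdeg] at hn
      interval_cases n
      · rw [hc0, hP, Ideal.mem_span_singleton, Polynomial.dvd_iff_isRoot]
        simp [hv, Polynomial.IsRoot]
        ring
      · rw [hc1]; exact Ideal.zero_mem _
    · rw [hc0, hP, Ideal.span_singleton_pow, Ideal.mem_span_singleton]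
      rintro ⟨g, hg⟩
      have hd := congrArg Polynomial.derivative hg
      have := congrArg (Polynomial.eval a) hd
      simp [hv, Polynomial.derivative_mul, Polynomial.derivative_pow] at this
      nlinarith [pow_pos ha 3]
  have hprim : q.IsPrimitive := by
    intro r hr
    have h2 : r ∣ q.coeff 2 := (Polynomial.C_dvd_iff_dvd_coeff r q).mp hr 2
    rw [hc2] at h2
    exact isUnit_of_dvd_unit h2 hub
  exact heis.irreducible hprime hprim (by omega)

open MvPolynomial in
theorem gerono_irreducible (a b : ℝ) (ha : a > 0) (hb : b > 0) :
    Irreducible ((X 0 ^ 4 - C (a^2) * X 0 ^ 2 + C (b^2) * X 1 ^ 2 :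
      MvPolynomial (Fin 2) ℝ)) := by
  rw [← MulEquiv.irreducible_iff (myE : MvPolynomial (Fin 2) ℝ ≃* Polynomial (Polynomial ℝ))]
  have heq : myE ((X 0 ^ 4 - C (a^2) * X 0 ^ 2 + C (b^2) * X 1 ^ 2 : MvPolynomial (Fin 2) ℝ)) =
      Polynomial.C (Polynomial.X ^ 4 - Polynomial.C (a^2) * Polynomial.X ^ 2)
        + Polynomial.C (Polynomial.C (b^2)) * Polynomial.X ^ 2 := by
    simp only [map_add, map_sub, map_mul, map_pow, myE_X0, myE_X1, myE_C]
  rw [show ((myE : MvPolynomial (Fin 2) ℝ ≃* Polynomial (Polynomial ℝ)) _ ) = _ from heq]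
  exact q_irred a b ha hb
end
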